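/- Let A be a complex C*-algebra and let τ : A → ℂ be a continuous linear functional that is positive (τ(a⋆ * a) is a nonnegative real for every a ∈ A) and tracial (τ(a * b) = τ(b * a) for all a, b ∈ A). Then there exists a linear functional τ̃ on the multiplier algebra 𝓜(ℂ, A) of A such that: τ̃ is continuous with operator norm equal to that of τ; τ̃ is positive, i.e. τ̃(m⋆ * m) is a nonnegative real for every m ∈ 𝓜(ℂ, A); τ̃ is tracial, i.e. τ̃(m * n) = τ̃(n * m) for all m, n ∈ 𝓜(ℂ, A); and τ̃ extends τ, i.e. τ̃(ι(a)) = τ(a) for all a ∈ A, where ι : A → 𝓜(ℂ, A) is the canonical embedding of A into its multiplier algebra. -/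

import Mathlib

/-!
Let `e` run through the canonical increasing approximate unit of `A`; the extension is
`τ' m = lim τ (m e)`. In the GNS space of `τ` the net `e` is Cauchy: if `τ a` is close to the
supremum of `τ` over positive contractions and `a ≤ e`, then
`‖e - a‖₂² = τ ((e - a)²) ≤ τ (e - a)` is small. Multipliers act boundedly on the GNS space, and
`x ↦ x⋆` is isometric there because `τ` is tracial; hence `τ (m e * n e') = ⟪(m e)⋆, n e'⟫`
converges jointly in `(e, e')`. Its two iterated limits are `τ' (m * n)` and, by traciality,
`τ' (n * m)`.
-/

open scoped MultiplierAlgebra ComplexOrder InnerProductSpace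
open Filter Topology

theorem Filter.Tendsto.of_prod_of_forall_tendsto {ι κ X : Type*} [TopologicalSpace X]
    [RegularSpace X] {la : Filter ι} {lb : Filter κ} [la.NeBot] {F : ι × κ → X} {H : κ → X} {x : X}
    (hF : Tendsto F (la ×ˢ lb) (𝓝 x)) (hH : ∀ b, Tendsto (fun a => F (a, b)) la (𝓝 (H b))) :
    Tendsto H lb (𝓝 x) := by
  refine (closed_nhds_basis x).tendsto_right_iff.2 fun U ⟨hxU, hU⟩ => ?_
  obtain ⟨pa, hpa, pb, hpb, hpab⟩ := eventually_prod_iff.1 (hF.eventually_mem hxU)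
  filter_upwards [hpb] with b hb
  exact hU.mem_of_tendsto (hH b) (hpa.mono fun a ha => hpab ha hb)

section

variable {A : Type*} [NonUnitalCStarAlgebra A]

namespace DoubleCentralizer

lemma fst_mul (m : 𝓜(ℂ, A)) (x y : A) : m.fst (x * y) = m.fst x * y := by
  have h (z : A) : z * (m.fst (x * y) - m.fst x * y) = 0 := by
    rw [mul_sub, ← m.central, ← mul_assoc, m.central, mul_assoc, sub_self]
  simpa [sub_eq_zero] using CStarRing.star_mul_self_eq_zero_iff _ |>.mp (h _)

lemma star_mul_fst (m : 𝓜(ℂ, A)) (x y : A) : star x * m.fst y = star ((star m).fst x) * y := by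
  rw [← m.central, star_fst, star_star]

lemma star_mul_fst_star_mul_self (m : 𝓜(ℂ, A)) (x : A) :
    star x * (star m * m).fst x = star (m.fst x) * m.fst x := by
  show star x * (star m).fst (m.fst x) = _
  rw [star_mul_fst, star_star]

lemma star_fst_mul_fst_le [PartialOrder A] [StarOrderedRing A] (m : 𝓜(ℂ, A)) (a : A) :
    star (m.fst a) * m.fst a ≤ ‖m‖ ^ 2 • (star a * a) := by
  let _ : PartialOrder 𝓜(ℂ, A) := CStarAlgebra.spectralOrder _
  have : StarOrderedRing 𝓜(ℂ, A) := CStarAlgebra.spectralOrderedRing _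
  obtain ⟨q, hq⟩ := CStarAlgebra.nonneg_iff_eq_star_mul_self.mp <|
    sub_nonneg.mpr (CStarAlgebra.star_mul_le_algebraMap_norm_sq (a := m))
  rw [← sub_nonneg]
  calc (0 : A) ≤ star (q.fst a) * q.fst a := star_mul_self_nonneg _
    _ = star a * (algebraMap ℝ 𝓜(ℂ, A) (‖m‖ ^ 2) - star m * m).fst a := by
      rw [hq, star_mul_fst_star_mul_self]
    _ = _ := by
      rw [sub_fst, sub_apply, mul_sub, star_mul_fst_star_mul_self]
      simp [Algebra.algebraMap_eq_smul_one, mul_smul_comm]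

end DoubleCentralizer

lemma CStarAlgebra.mul_self_le_self [PartialOrder A] [StarOrderedRing A] {u : A} (hu : 0 ≤ u)
    (hu₁ : ‖u‖ ≤ 1) : u * u ≤ u := by
  obtain ⟨b, hb, rfl⟩ := CStarAlgebra.nonneg_iff_exists_isSelfAdjoint_and_eq_mul_self.mp hu
  calc b * b * (b * b) = star b * (b * b) * b := by rw [hb.star_eq]; simp only [mul_assoc]
    _ ≤ ‖b * b‖ • (star b * b) :=
      CStarAlgebra.star_left_conjugate_le_norm_smul hu.isSelfAdjoint
    _ ≤ b * b := by rw [hb.star_eq]; exact smul_le_of_le_one_left hu hu₁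

namespace PositiveLinearMap

open CStarAlgebra UniformSpace

variable [PartialOrder A] [StarOrderedRing A] (f : A →ₚ[ℂ] ℂ)

lemma sq_norm_toPreGNS (a : A) : ‖f.toPreGNS a‖ ^ 2 = (f (star a * a)).re := by
  rw [preGNS_norm_def, ofPreGNS_toPreGNS,
    Real.sq_sqrt (Complex.le_def.1 (f.map_nonneg (star_mul_self_nonneg a))).1]

lemma norm_toPreGNS_fst_le (m : 𝓜(ℂ, A)) (a : A) :
    ‖f.toPreGNS (m.fst a)‖ ≤ ‖m‖ * ‖f.toPreGNS a‖ := by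
  rw [← sq_le_sq₀ (by positivity) (by positivity), mul_pow, sq_norm_toPreGNS, sq_norm_toPreGNS]
  have h := (Complex.le_def.1 (OrderHomClass.mono f (m.star_fst_mul_fst_le a))).1
  rwa [map_smul_of_tower, Complex.smul_re, smul_eq_mul] at h

lemma lipschitzWith_toPreGNS_fst (m : 𝓜(ℂ, A)) :
    LipschitzWith ‖m‖₊ fun x : f.PreGNS => f.toPreGNS (m.fst (f.ofPreGNS x)) :=
  LipschitzWith.of_dist_le_mul fun x y => by
    simpa [dist_eq_norm, ← map_sub] using f.norm_toPreGNS_fst_le m (f.ofPreGNS x - f.ofPreGNS y)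

lemma exists_re_apply_lt_add {ε : ℝ} (hε : 0 < ε) :
    ∃ a : A, (0 ≤ a ∧ ‖a‖ < 1) ∧ ∀ e : A, 0 ≤ e → ‖e‖ ≤ 1 → (f e).re < (f a).re + ε := by
  set S := (fun x => (f x).re) '' {x : A | 0 ≤ x ∧ ‖x‖ ≤ 1}
  obtain ⟨C, hC⟩ := f.exists_norm_apply_le
  have hS : BddAbove S := ⟨C, by
    rintro _ ⟨x, ⟨-, hx⟩, rfl⟩
    calc (f x).re ≤ ‖f x‖ := Complex.re_le_norm _
      _ ≤ C * ‖x‖ := hC x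
      _ ≤ C := mul_le_of_le_one_right C.2 hx⟩
  obtain ⟨_, ⟨b, ⟨hb₀, hb₁⟩, rfl⟩, hb⟩ :=
    exists_lt_of_lt_csSup (⟨_, 0, ⟨le_rfl, by simp⟩, rfl⟩ : S.Nonempty)
      (sub_lt_self (sSup S) hε)
  -- `b` may have norm one, so shrink it slightly to get a basis element of the approximate unit
  have hscale : Tendsto (fun t : ℝ => t * (f b).re) (𝓝[<] 1) (𝓝 ((f b).re)) := by
    simpa using
      ((tendsto_id (x := 𝓝 (1 : ℝ))).mul_const (f b).re).mono_left nhdsWithin_le_nhds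
  obtain ⟨t, ht, ht₀, ht₁⟩ :=
    ((hscale.eventually (lt_mem_nhds hb)).and (Ioo_mem_nhdsLT zero_lt_one)).exists
  refine ⟨t • b, ⟨smul_nonneg ht₀.le hb₀, ?_⟩, fun e he₀ he₁ => ?_⟩
  · rw [norm_smul, Real.norm_of_nonneg ht₀.le]
    exact (mul_le_of_le_one_right ht₀.le hb₁).trans_lt ht₁
  · have := le_csSup hS ⟨e, ⟨he₀, he₁⟩, rfl⟩
    rw [map_smul_of_tower, Complex.smul_re, smul_eq_mul]
    linarith

lemma cauchy_map_toPreGNS_approximateUnit : Cauchy (map f.toPreGNS (approximateUnit A)) := by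
  refine Metric.cauchy_iff.2 ⟨inferInstance, fun ε hε => ?_⟩
  obtain ⟨a, ha, hlt⟩ := f.exists_re_apply_lt_add (show 0 < (ε / 2) ^ 2 by positivity)
  have hsmall : ∀ e ∈ {x | a ≤ x} ∩ Metric.closedBall 0 1, ‖f.toPreGNS (e - a)‖ < ε / 2 := by
    rintro e ⟨hae, he⟩
    have he₁ : ‖e‖ ≤ 1 := by simpa using he
    have hu : 0 ≤ e - a := sub_nonneg.2 hae
    have hu₁ : ‖e - a‖ ≤ 1 :=
      (norm_le_norm_of_nonneg_of_le hu (sub_le_self e ha.1)).trans he₁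
    rw [← sq_lt_sq₀ (norm_nonneg _) (by positivity), sq_norm_toPreGNS, hu.isSelfAdjoint.star_eq]
    calc (f ((e - a) * (e - a))).re ≤ (f (e - a)).re :=
          (Complex.le_def.1 (OrderHomClass.mono f (mul_self_le_self hu hu₁))).1
      _ < (ε / 2) ^ 2 := by
          rw [map_sub, Complex.sub_re]
          linarith [hlt e (ha.1.trans hae) he₁]
  refine ⟨f.toPreGNS '' ({x | a ≤ x} ∩ Metric.closedBall 0 1),
    image_mem_map ((hasBasis_approximateUnit A).mem_of_mem ha), ?_⟩
  rintro _ ⟨e, he, rfl⟩ _ ⟨e', he', rfl⟩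
  calc dist (f.toPreGNS e) (f.toPreGNS e') = ‖f.toPreGNS (e - a) - f.toPreGNS (e' - a)‖ := by
        rw [dist_eq_norm, ← map_sub, ← map_sub, sub_sub_sub_cancel_right]
    _ ≤ ‖f.toPreGNS (e - a)‖ + ‖f.toPreGNS (e' - a)‖ := norm_sub_le _ _
    _ < ε / 2 + ε / 2 := add_lt_add (hsmall e he) (hsmall e' he')
    _ = ε := add_halves ε

lemma exists_tendsto_gns_of_uniformContinuous {Φ : f.PreGNS → f.PreGNS}
    (hΦ : UniformContinuous Φ) :
    ∃ ξ : f.GNS, Tendsto (fun e => (Φ (f.toPreGNS e) : f.GNS)) (approximateUnit A) (𝓝 ξ) := by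
  have := f.cauchy_map_toPreGNS_approximateUnit.map
    ((Completion.uniformContinuous_coe f.PreGNS).comp hΦ)
  rw [map_map] at this
  exact CompleteSpace.complete this

variable {f}

lemma isometry_toPreGNS_star (htr : ∀ a b, f (a * b) = f (b * a)) :
    Isometry fun x : f.PreGNS => f.toPreGNS (star (f.ofPreGNS x)) :=
  Isometry.of_dist_eq fun x y => by
    simp only [dist_eq_norm, preGNS_norm_def, ← map_sub, ← star_sub, ofPreGNS_toPreGNS,
      star_star, htr _ (star _)]

lemma exists_tendsto_apply_fst_mul_fst (htr : ∀ a b, f (a * b) = f (b * a))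
    (m n : 𝓜(ℂ, A)) :
    ∃ z, Tendsto (fun p : A × A => f (m.fst p.1 * n.fst p.2))
      (approximateUnit A ×ˢ approximateUnit A) (𝓝 z) := by
  obtain ⟨ζ, hζ⟩ := f.exists_tendsto_gns_of_uniformContinuous
    ((isometry_toPreGNS_star htr).uniformContinuous.comp
      (f.lipschitzWith_toPreGNS_fst m).uniformContinuous)
  obtain ⟨ξ, hξ⟩ :=
    f.exists_tendsto_gns_of_uniformContinuous (f.lipschitzWith_toPreGNS_fst n).uniformContinuous
  refine ⟨⟪ζ, ξ⟫_ℂ, ((hζ.comp tendsto_fst).inner (hξ.comp tendsto_snd)).congr fun p => ?_⟩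
  simp [Completion.inner_coe, preGNS_inner_def]

lemma exists_tendsto_apply_fst_mul (htr : ∀ a b, f (a * b) = f (b * a)) (m n : 𝓜(ℂ, A)) :
    ∃ z, Tendsto (fun e => f ((m * n).fst e)) (approximateUnit A) (𝓝 z) ∧
      Tendsto (fun e => f ((n * m).fst e)) (approximateUnit A) (𝓝 z) := by
  have hleft (m n : 𝓜(ℂ, A)) (e' : A) :
      Tendsto (fun e => f (m.fst e * n.fst e')) (approximateUnit A)
        (𝓝 (f ((m * n).fst e'))) := by
    simp_rw [← DoubleCentralizer.fst_mul]
    exact ((map_continuous f).tendsto _).comp <| (m.fst.continuous.tendsto _).comp <|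
      (increasingApproximateUnit A).tendsto_mul_right _
  obtain ⟨z, hz⟩ := exists_tendsto_apply_fst_mul_fst htr m n
  have hz' : Tendsto (fun p : A × A => f (n.fst p.1 * m.fst p.2))
      (approximateUnit A ×ˢ approximateUnit A) (𝓝 z) :=
    (hz.comp tendsto_prod_swap).congr fun p => htr _ _
  exact ⟨z, hz.of_prod_of_forall_tendsto (hleft m n), hz'.of_prod_of_forall_tendsto (hleft n m)⟩

lemma apply_fst_star_mul_self_nonneg (htr : ∀ a b, f (a * b) = f (b * a)) (m : 𝓜(ℂ, A))
    {e : A} (he : 0 ≤ e) : 0 ≤ f ((star m * m).fst e) := by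
  obtain ⟨b, hb, rfl⟩ := CStarAlgebra.nonneg_iff_exists_isSelfAdjoint_and_eq_mul_self.mp he
  have h := m.star_mul_fst_star_mul_self b
  rw [hb.star_eq] at h
  rw [DoubleCentralizer.fst_mul, htr, h]
  exact f.map_nonneg (star_mul_self_nonneg _)

end PositiveLinearMap

namespace ContinuousLinearMap

open CStarAlgebra

variable [PartialOrder A] [StarOrderedRing A]

lemma tendsto_apply_fst_coe (τ : A →L[ℂ] ℂ) (a : A) :
    Tendsto (fun e => τ ((a : 𝓜(ℂ, A)).fst e)) (approximateUnit A) (𝓝 (τ a)) :=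
  (τ.continuous.tendsto a).comp ((increasingApproximateUnit A).tendsto_mul_left a)

lemma exists_multiplier_extension (τ : A →L[ℂ] ℂ)
    (h : ∀ m : 𝓜(ℂ, A), ∃ z, Tendsto (fun e => τ (m.fst e)) (approximateUnit A) (𝓝 z)) :
    ∃ τ' : 𝓜(ℂ, A) →L[ℂ] ℂ, ‖τ'‖ = ‖τ‖ ∧
      ∀ m, Tendsto (fun e => τ (m.fst e)) (approximateUnit A) (𝓝 (τ' m)) := by
  choose v hv using h
  let g (e : A) : 𝓜(ℂ, A) →ₗ[ℂ] ℂ :=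
    { toFun m := τ (m.fst e)
      map_add' m n := by simp
      map_smul' c m := by simp }
  have hbound (m : 𝓜(ℂ, A)) : ‖v m‖ ≤ ‖τ‖ * ‖m‖ := by
    refine le_of_tendsto (hv m).norm ?_
    filter_upwards [(increasingApproximateUnit A).eventually_norm] with e he
    calc ‖τ (m.fst e)‖ ≤ ‖τ‖ * ‖m.fst e‖ := τ.le_opNorm _
      _ ≤ ‖τ‖ * ‖m‖ := by
        gcongr
        simpa using m.fst.le_opNorm_of_le he
  let τ' := (linearMapOfTendsto v g (tendsto_pi_nhds.2 hv)).mkContinuous ‖τ‖ hbound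
  refine ⟨τ', le_antisymm (LinearMap.mkContinuous_norm_le _ (norm_nonneg _) _) ?_, hv⟩
  refine τ.opNorm_le_bound (norm_nonneg _) fun a => ?_
  calc ‖τ a‖ = ‖τ' a‖ := by
        rw [tendsto_nhds_unique (tendsto_apply_fst_coe τ a) (hv a)]; rfl
    _ ≤ ‖τ'‖ * ‖(a : 𝓜(ℂ, A))‖ := τ'.le_opNorm _
    _ ≤ ‖τ'‖ * ‖a‖ := by
        gcongr
        rw [← DoubleCentralizer.norm_fst, DoubleCentralizer.coe_fst]
        exact opNorm_mul_apply_le _ _ _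

end ContinuousLinearMap

end

/-- Every continuous positive tracial linear functional `τ` on a C*-algebra `A` extends to a
continuous positive tracial linear functional on the multiplier algebra `𝓜(ℂ, A)` of the same
norm. -/
theorem exists_trace_extension_to_multiplier_algebra
    {A : Type*} [NonUnitalCStarAlgebra A]
    (τ : A →L[ℂ] ℂ)
    (hτ_pos : ∀ a : A, 0 ≤ τ (star a * a))
    (hτ_tracial : ∀ a b : A, τ (a * b) = τ (b * a)) :
    ∃ τ' : 𝓜(ℂ, A) →L[ℂ] ℂ,
      ‖τ'‖ = ‖τ‖ ∧
      (∀ m : 𝓜(ℂ, A), 0 ≤ τ' (star m * m)) ∧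
      (∀ m n : 𝓜(ℂ, A), τ' (m * n) = τ' (n * m)) ∧
      (∀ a : A, τ' (a : 𝓜(ℂ, A)) = τ a) := by
  let _ := CStarAlgebra.spectralOrder A
  have := CStarAlgebra.spectralOrderedRing A
  let f : A →ₚ[ℂ] ℂ := .mk₀ τ.toLinearMap fun x hx => by
    obtain ⟨s, rfl⟩ := CStarAlgebra.nonneg_iff_eq_star_mul_self.mp hx
    exact hτ_pos s
  have htr : ∀ a b, f (a * b) = f (b * a) := hτ_tracial
  obtain ⟨τ', hnorm, hτ'⟩ := τ.exists_multiplier_extension fun m => by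
    obtain ⟨z, hz, -⟩ := f.exists_tendsto_apply_fst_mul htr m 1
    simp only [mul_one] at hz
    exact ⟨z, hz⟩
  refine ⟨τ', hnorm, fun m => ge_of_tendsto (hτ' _) ?_, fun m n => ?_, fun a => ?_⟩
  · filter_upwards [(CStarAlgebra.increasingApproximateUnit A).eventually_nonneg] with e he
    exact f.apply_fst_star_mul_self_nonneg htr m he
  · obtain ⟨z, hmn, hnm⟩ := f.exists_tendsto_apply_fst_mul htr m n
    rw [tendsto_nhds_unique (hτ' _) hmn, tendsto_nhds_unique (hτ' _) hnm]
  · exact tendsto_nhds_unique (hτ' a) (τ.tendsto_apply_fst_coe a)
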